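/- arXiv:0803.4224 — 2 statements merged into one kernel-verified Lean document; each statement's English description precedes it below -/
import Mathlib

section
/- Let Δx > 0, θ ≥ 1, and let s : ℝ → ℝ be twice continuously differentiable with |s''(x)| ≤ M for all x ∈ ℝ. For j ∈ ℤ set x_j = j·Δx and let S̄_j = (1/Δx)∫_{x_j−Δx/2}^{x_j+Δx/2} s(x) dx be the cell averages. Then the minmod numerical derivative (S_x)_j := MM( θ(S̄_{j+1} − S̄_j)/Δx , (S̄_{j+1} − S̄_{j−1})/(2Δx) , θ(S̄_j − S̄_{j−1})/Δx ) satisfies |(S_x)_j − s'(x_j)| ≤ 5θMΔx for every j ∈ ℤ; in particular the minmod-limited slope approximates ∂s/∂x at x_j to within O(Δx), which guarantees second-order accuracy of the reconstruction. -/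
open MeasureTheory intervalIntegral

/-!
The cell average of `s` over a cell of width `Δx` differs from the point value at its centre
by `O(MΔx²)` (the linear Taylor term averages to zero), so by Taylor's formula each of the three
difference quotients of the cell averages is within `2MΔx` of `s'(x_j)`. For `θ ≥ 1` the value
`MM(θb₁, b₂, θb₃)` always lies between the smallest and the largest of `b₁, b₂, b₃`: scaling by
`θ` moves a positive (negative) entry away from zero, and `0` is returned only when the `bᵢ`
change sign. Hence the minmod slope inherits the bound `2MΔx ≤ 5θMΔx`.
-/

/-- The minmod function: `MM(a₁,a₂,a₃) = min{aᵢ}` if all `aᵢ > 0`,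
`max{aᵢ}` if all `aᵢ < 0`, and `0` otherwise. -/
noncomputable def minmod (a₁ a₂ a₃ : ℝ) : ℝ :=
  if 0 < a₁ ∧ 0 < a₂ ∧ 0 < a₃ then min a₁ (min a₂ a₃)
  else if a₁ < 0 ∧ a₂ < 0 ∧ a₃ < 0 then max a₁ (max a₂ a₃)
  else 0

theorem minmod_mul_mem_Icc {θ : ℝ} (hθ : 1 ≤ θ) (b₁ b₂ b₃ : ℝ) :
    minmod (θ * b₁) b₂ (θ * b₃) ∈ Set.Icc (min b₁ (min b₂ b₃)) (max b₁ (max b₂ b₃)) := by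
  have hθ₀ : 0 < θ := by linarith
  have pos_iff (b : ℝ) : 0 < θ * b ↔ 0 < b := mul_pos_iff_of_pos_left hθ₀
  have neg_iff (b : ℝ) : θ * b < 0 ↔ b < 0 := by
    simpa using (mul_pos_iff_of_pos_left hθ₀ (b := -b))
  have b₂_mem : b₂ ∈ Set.Icc (min b₁ (min b₂ b₃)) (max b₁ (max b₂ b₃)) :=
    ⟨(min_le_right _ _).trans (min_le_left _ _), (le_max_left _ _).trans (le_max_right _ _)⟩
  unfold minmod
  simp only [pos_iff, neg_iff]
  split_ifs with hpos hneg
  · obtain ⟨h₁, -, h₃⟩ := hpos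
    refine ⟨min_le_min ?_ (min_le_min_left _ ?_),
      (min_le_right _ _).trans ((min_le_left _ _).trans b₂_mem.2)⟩ <;> nlinarith
  · obtain ⟨h₁, -, h₃⟩ := hneg
    refine ⟨b₂_mem.1.trans ((le_max_left _ _).trans (le_max_right _ _)),
      max_le_max ?_ (max_le_max_left _ ?_)⟩ <;> nlinarith
  · simp only [not_and_or, not_lt] at hpos hneg
    simp only [Set.mem_Icc, min_le_iff, le_max_iff]
    tauto

theorem abs_minmod_mul_sub_le {θ b₁ b₂ b₃ d ε : ℝ} (hθ : 1 ≤ θ) (h₁ : |b₁ - d| ≤ ε)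
    (h₂ : |b₂ - d| ≤ ε) (h₃ : |b₃ - d| ≤ ε) : |minmod (θ * b₁) b₂ (θ * b₃) - d| ≤ ε := by
  rw [abs_sub_le_iff] at h₁ h₂ h₃ ⊢
  obtain ⟨h_min, h_max⟩ := minmod_mul_mem_Icc hθ b₁ b₂ b₃
  have h_lower : d - ε ≤ min b₁ (min b₂ b₃) := le_min (by linarith) (le_min (by linarith) (by linarith))
  have h_upper : max b₁ (max b₂ b₃) ≤ d + ε := max_le (by linarith) (max_le (by linarith) (by linarith))
  constructor <;> linarith

noncomputable def cellAverage (f : ℝ → ℝ) (h c : ℝ) : ℝ :=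
  (1 / h) * ∫ x in (c - h / 2)..(c + h / 2), f x

section

variable {f : ℝ → ℝ} {M : ℝ}

theorem abs_deriv_sub_deriv_le (hf' : Differentiable ℝ (deriv f))
    (hM : ∀ x, |deriv (deriv f) x| ≤ M) (x y : ℝ) :
    |deriv f y - deriv f x| ≤ M * |y - x| :=
  convex_univ.norm_image_sub_le_of_norm_deriv_le (fun z _ => hf' z) (fun z _ => hM z)
    trivial trivial

theorem abs_sub_sub_deriv_mul_le (hf : Differentiable ℝ f) (hf' : Differentiable ℝ (deriv f))
    (hM : ∀ x, |deriv (deriv f) x| ≤ M) (x y : ℝ) :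
    |f y - f x - deriv f x * (y - x)| ≤ M * (y - x) ^ 2 := by
  have hM₀ : 0 ≤ M := (abs_nonneg _).trans (hM x)
  let g t := f t - deriv f x * t
  have hg : ∀ t, HasDerivAt g (deriv f t - deriv f x) t := fun t =>
    (hf t).hasDerivAt.sub (by simpa using (hasDerivAt_id t).const_mul (deriv f x))
  have hg_le : ∀ t ∈ Set.uIcc x y, ‖deriv g t‖ ≤ M * |y - x| := fun t ht => by
    rw [(hg t).deriv]
    exact (abs_deriv_sub_deriv_le hf' hM x t).trans
      (mul_le_mul_of_nonneg_left (Set.abs_sub_left_of_mem_uIcc ht) hM₀)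
  have h_mvt := (convex_uIcc x y).norm_image_sub_le_of_norm_deriv_le
    (fun t _ => (hg t).differentiableAt) hg_le Set.left_mem_uIcc Set.right_mem_uIcc
  calc |f y - f x - deriv f x * (y - x)| = ‖g y - g x‖ := by
        simp only [g, Real.norm_eq_abs]; ring_nf
    _ ≤ M * |y - x| * ‖y - x‖ := h_mvt
    _ = M * (y - x) ^ 2 := by rw [Real.norm_eq_abs, mul_assoc, ← abs_mul, ← sq, abs_sq]

theorem integral_sub_center_eq_zero (c r : ℝ) : ∫ x in (c - r)..(c + r), (x - c) = 0 := by
  simp [integral_comp_sub_right fun x => x]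

theorem abs_cellAverage_sub_le (hf : Differentiable ℝ f) (hf' : Differentiable ℝ (deriv f))
    (hM : ∀ x, |deriv (deriv f) x| ≤ M) {h : ℝ} (hh : 0 < h) (c : ℝ) :
    |cellAverage f h c - f c| ≤ M * h ^ 2 / 4 := by
  have hM₀ : 0 ≤ M := (abs_nonneg _).trans (hM c)
  let g x := f x - f c - deriv f c * (x - c)
  have hg_int : ∫ x in (c - h / 2)..(c + h / 2), g x
      = (∫ x in (c - h / 2)..(c + h / 2), f x) - h * f c := by
    have hf_int := hf.continuous.intervalIntegrable (μ := volume) (c - h / 2) (c + h / 2)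
    simp only [g]
    have hlin_int : IntervalIntegrable (fun x => deriv f c * (x - c)) volume
        (c - h / 2) (c + h / 2) := (by fun_prop : Continuous _).intervalIntegrable _ _
    rw [integral_sub (hf_int.sub intervalIntegrable_const) hlin_int,
      intervalIntegral.integral_const_mul, integral_sub_center_eq_zero,
      integral_sub hf_int intervalIntegrable_const]
    simp
  have hg_le : ∀ x ∈ Set.uIoc (c - h / 2) (c + h / 2), ‖g x‖ ≤ M * (h / 2) ^ 2 := by
    intro x hx
    rw [Set.uIoc_of_le (by linarith)] at hx
    have hsq : (x - c) ^ 2 ≤ (h / 2) ^ 2 := sq_le_sq' (by linarith [hx.1]) (by linarith [hx.2])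
    exact (abs_sub_sub_deriv_mul_le hf hf' hM c x).trans (mul_le_mul_of_nonneg_left hsq hM₀)
  have h_int_le := norm_integral_le_of_norm_le_const hg_le
  rw [hg_int, Real.norm_eq_abs, show c + h / 2 - (c - h / 2) = h by ring, abs_of_pos hh] at h_int_le
  rw [cellAverage, show 1 / h * (∫ x in (c - h / 2)..(c + h / 2), f x) - f c
    = ((∫ x in (c - h / 2)..(c + h / 2), f x) - h * f c) / h by field_simp,
    abs_div, abs_of_pos hh, div_le_iff₀ hh]
  linarith

theorem abs_cellAverage_sub_taylor_le (hf : Differentiable ℝ f)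
    (hf' : Differentiable ℝ (deriv f)) (hM : ∀ x, |deriv (deriv f) x| ≤ M) {h : ℝ} (hh : 0 < h)
    (x t : ℝ) : |cellAverage f h (x + t) - f x - deriv f x * t| ≤ M * (h ^ 2 / 4 + t ^ 2) := by
  have h_avg := abs_cellAverage_sub_le hf hf' hM hh (x + t)
  have h_taylor := abs_sub_sub_deriv_mul_le hf hf' hM x (x + t)
  rw [add_sub_cancel_left] at h_taylor
  calc |cellAverage f h (x + t) - f x - deriv f x * t|
      = |(cellAverage f h (x + t) - f (x + t)) + (f (x + t) - f x - deriv f x * t)| := by ring_nf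
    _ ≤ M * h ^ 2 / 4 + M * t ^ 2 := (abs_add_le _ _).trans (add_le_add h_avg h_taylor)
    _ = M * (h ^ 2 / 4 + t ^ 2) := by ring

end

theorem abs_divided_difference_sub_le {u v c d p q h ε₁ ε₂ K : ℝ} (hh : 0 < h) (hpq : q - p = h)
    (hu : |u - c - d * p| ≤ ε₁) (hv : |v - c - d * q| ≤ ε₂) (hε : ε₁ + ε₂ ≤ K * h) :
    |(v - u) / h - d| ≤ K := by
  rw [div_sub' hh.ne', abs_div, abs_of_pos hh, div_le_iff₀ hh]
  calc |v - u - h * d| = |(v - c - d * q) - (u - c - d * p)| := by rw [← hpq]; ring_nf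
    _ ≤ ε₁ + ε₂ := (abs_sub _ _).trans (by linarith)
    _ ≤ K * h := hε

/-- For a `C²` function `s` with `|s''| ≤ M`, the minmod-limited numerical derivative
computed from the cell averages `S̄_j` on a uniform grid of spacing `Δx`
approximates `s'(x_j)` to within `5θMΔx`, i.e. to `O(Δx)`, which guarantees
second-order accuracy of the MUSCL reconstruction. -/
theorem minmod_slope_second_order_accuracy
    (Δx θ M : ℝ) (hΔx : 0 < Δx) (hθ : 1 ≤ θ)
    (s : ℝ → ℝ) (hs : ContDiff ℝ 2 s)
    (hM : ∀ x : ℝ, |iteratedDeriv 2 s x| ≤ M)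
    (Sbar : ℤ → ℝ)
    (hSbar : ∀ j : ℤ, Sbar j =
      (1/Δx) * ∫ x in ((j : ℝ)*Δx - Δx/2)..((j : ℝ)*Δx + Δx/2), s x)
    (j : ℤ) :
    |minmod (θ * (Sbar (j+1) - Sbar j) / Δx)
            ((Sbar (j+1) - Sbar (j-1)) / (2*Δx))
            (θ * (Sbar j - Sbar (j-1)) / Δx)
      - deriv s ((j : ℝ)*Δx)| ≤ 5*θ*M*Δx := by
  have hs₁ : Differentiable ℝ s := hs.differentiable (by norm_num)
  have hs₂ : Differentiable ℝ (deriv s) := (hs.iterate_deriv' 1 1).differentiable (by norm_num)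
  have hM' : ∀ x, |deriv (deriv s) x| ≤ M := by simpa [iteratedDeriv_succ] using hM
  have hM₀ : 0 ≤ M := (abs_nonneg _).trans (hM 0)
  set X : ℝ := j * Δx
  have h_cell (k : ℤ) (t : ℝ) (hk : ((k : ℝ) - j) * Δx = t) :
      |Sbar k - s X - deriv s X * t| ≤ M * (Δx ^ 2 / 4 + t ^ 2) := by
    rw [hSbar, show (k : ℝ) * Δx = X + t by rw [← hk]; ring]
    exact abs_cellAverage_sub_taylor_le hs₁ hs₂ hM' hΔx X t
  have h_next := h_cell (j + 1) Δx (by push_cast; ring)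
  have h_mid := h_cell j 0 (by ring)
  have h_prev := h_cell (j - 1) (-Δx) (by push_cast; ring)
  have hMΔx := mul_nonneg hM₀ (sq_nonneg Δx)
  rw [mul_div_assoc, mul_div_assoc]
  calc _ ≤ 2 * M * Δx := abs_minmod_mul_sub_le hθ
        (abs_divided_difference_sub_le hΔx (sub_zero Δx) h_mid h_next (by linarith))
        (abs_divided_difference_sub_le (by positivity) (by ring) h_prev h_next (by linarith))
        (abs_divided_difference_sub_le hΔx (by ring) h_prev h_mid (by linarith))
    _ ≤ 5 * θ * M * Δx := by nlinarith [mul_nonneg hM₀ hΔx.le]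
end

section
/- Let Δx > 0 and 1 ≤ θ ≤ 2. Let (S̄_j)_{j∈ℤ} be any real sequence and define the minmod slope σ_j := MM( θ(S̄_{j+1} − S̄_j)/Δx , (S̄_{j+1} − S̄_{j−1})/(2Δx) , θ(S̄_j − S̄_{j−1})/Δx ). Then for every j the two interface values of the reconstructed linear profile, S̄_j + (Δx/2)σ_j and S̄_j − (Δx/2)σ_j, both lie in the interval [min{S̄_{j−1}, S̄_j, S̄_{j+1}}, max{S̄_{j−1}, S̄_j, S̄_{j+1}}]; i.e., the minmod limiter guarantees the nonoscillatory property of the reconstruction (no new extrema are created at cell interfaces). -/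
/-!
Minmod lies between `0` and each of its arguments, and the outer arguments of `σ_j`, scaled by
`Δx/2`, are the one-sided differences `S̄_{j+1} - S̄_j`, `S̄_j - S̄_{j-1}` times `θ/2 ∈ [0, 1]`.
So `s = (Δx/2)σ_j` lies between `0` and each of these differences, which puts `S̄_j + s`
between `S̄_j` and `S̄_{j+1}`, and `S̄_j - s` between `S̄_j` and `S̄_{j-1}`.
-/

open Set

theorem minmod_mem_uIcc_zero_left (x y z : ℝ) : minmod x y z ∈ uIcc 0 x := by
  unfold minmod
  split_ifs with hpos hneg
  · exact mem_uIcc_of_le (lt_min hpos.1 (lt_min hpos.2.1 hpos.2.2)).le (min_le_left _ _)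
  · exact mem_uIcc_of_ge (le_max_left _ _) (max_lt hneg.1 (max_lt hneg.2.1 hneg.2.2)).le
  · exact left_mem_uIcc

theorem minmod_mem_uIcc_zero_right (x y z : ℝ) : minmod x y z ∈ uIcc 0 z := by
  unfold minmod
  split_ifs with hpos hneg
  · exact mem_uIcc_of_le (lt_min hpos.1 (lt_min hpos.2.1 hpos.2.2)).le
      ((min_le_right _ _).trans (min_le_right _ _))
  · exact mem_uIcc_of_ge ((le_max_right _ _).trans (le_max_right _ _))
      (max_lt hneg.1 (max_lt hneg.2.1 hneg.2.2)).le
  · exact left_mem_uIcc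

theorem mul_mem_uIcc_zero_mul {w x : ℝ} (c : ℝ) (h : w ∈ uIcc 0 x) :
    c * w ∈ uIcc 0 (c * x) := by
  simpa only [image_const_mul_uIcc, mul_zero] using mem_image_of_mem (c * ·) h

theorem uIcc_zero_mul_subset {t : ℝ} (ht₀ : 0 ≤ t) (ht₁ : t ≤ 1) (a : ℝ) :
    uIcc 0 (t * a) ⊆ uIcc 0 a := by
  refine uIcc_subset_uIcc_left ?_
  rcases le_total 0 a with ha | ha
  · exact mem_uIcc_of_le (mul_nonneg ht₀ ha) (mul_le_of_le_one_left ha ht₁)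
  · exact mem_uIcc_of_ge (le_mul_of_le_one_left ha ht₁) (mul_nonpos_of_nonneg_of_nonpos ht₀ ha)

theorem half_mul_minmod_mem_uIcc_zero {Δx θ : ℝ} (hΔx : Δx ≠ 0) (hθ₀ : 0 ≤ θ) (hθ₂ : θ ≤ 2)
    (a m b : ℝ) :
    Δx / 2 * minmod (θ * a / Δx) m (θ * b / Δx) ∈ uIcc 0 a ∩ uIcc 0 b := by
  have hscale (u : ℝ) : Δx / 2 * (θ * u / Δx) = θ / 2 * u := by
    field_simp
  have hshrink (u : ℝ) : uIcc 0 (Δx / 2 * (θ * u / Δx)) ⊆ uIcc 0 u := by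
    rw [hscale]
    exact uIcc_zero_mul_subset (by linarith) (by linarith) u
  exact ⟨hshrink a (mul_mem_uIcc_zero_mul _ (minmod_mem_uIcc_zero_left _ _ _)),
    hshrink b (mul_mem_uIcc_zero_mul _ (minmod_mem_uIcc_zero_right _ _ _))⟩

theorem add_sub_mem_Icc_min_max {p q r s : ℝ} (hr : s ∈ uIcc 0 (r - q))
    (hp : s ∈ uIcc 0 (q - p)) :
    q + s ∈ Icc (min p (min q r)) (max p (max q r)) ∧
      q - s ∈ Icc (min p (min q r)) (max p (max q r)) := by
  have hp_mem : p ∈ Icc (min p (min q r)) (max p (max q r)) :=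
    ⟨min_le_left _ _, le_max_left _ _⟩
  have hq_mem : q ∈ Icc (min p (min q r)) (max p (max q r)) :=
    ⟨(min_le_right _ _).trans (min_le_left _ _), (le_max_left _ _).trans (le_max_right _ _)⟩
  have hr_mem : r ∈ Icc (min p (min q r)) (max p (max q r)) :=
    ⟨(min_le_right _ _).trans (min_le_right _ _), (le_max_right _ _).trans (le_max_right _ _)⟩
  have hadd : q + s ∈ uIcc q r := by
    simpa only [image_const_add_uIcc, add_zero, add_sub_cancel] using
      mem_image_of_mem (q + ·) hr
  have hsub : q - s ∈ uIcc q p := by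
    simpa only [image_const_sub_uIcc, sub_zero, sub_sub_cancel] using
      mem_image_of_mem (q - ·) hp
  exact ⟨uIcc_subset_Icc hq_mem hr_mem hadd, uIcc_subset_Icc hq_mem hp_mem hsub⟩

/-- Nonoscillatory property of the minmod-limited reconstruction: for `1 ≤ θ ≤ 2`,
the two interface values `S̄_j ± (Δx/2)σ_j` of the reconstructed linear profile lie
between `min{S̄_{j−1}, S̄_j, S̄_{j+1}}` and `max{S̄_{j−1}, S̄_j, S̄_{j+1}}`;
no new extrema are created at cell interfaces. -/
theorem minmod_reconstruction_nonoscillatory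
    (Δx θ : ℝ) (hΔx : 0 < Δx) (hθ₁ : 1 ≤ θ) (hθ₂ : θ ≤ 2)
    (S : ℤ → ℝ) (j : ℤ) :
    (S j + (Δx/2) * minmod (θ * (S (j+1) - S j) / Δx)
        ((S (j+1) - S (j-1)) / (2*Δx)) (θ * (S j - S (j-1)) / Δx)
      ∈ Set.Icc (min (S (j-1)) (min (S j) (S (j+1))))
                (max (S (j-1)) (max (S j) (S (j+1))))) ∧
    (S j - (Δx/2) * minmod (θ * (S (j+1) - S j) / Δx)
        ((S (j+1) - S (j-1)) / (2*Δx)) (θ * (S j - S (j-1)) / Δx)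
      ∈ Set.Icc (min (S (j-1)) (min (S j) (S (j+1))))
                (max (S (j-1)) (max (S j) (S (j+1))))) := by
  obtain ⟨hright, hleft⟩ := half_mul_minmod_mem_uIcc_zero hΔx.ne' (zero_le_one.trans hθ₁) hθ₂
    (S (j+1) - S j) ((S (j+1) - S (j-1)) / (2*Δx)) (S j - S (j-1))
  exact add_sub_mem_Icc_min_max hright hleft
end
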